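/- arXiv:0907.0056 — 2 statements merged into one kernel-verified Lean document; each statement's English description precedes it below -/
import Mathlib

section
/- Let A be a convex subset of a real topological vector space E, and let G be a finite-dimensional affine subspace of E such that (interior A) ∩ G ≠ ∅. Then (closure A) ∩ G equals the closure of A ∩ G in the relative topology of G. -/
/-!
Both sides are contained in `G`, and the closure of `A ∩ G` in `G` is `G ∩ closure (A ∩ G)`, so
the point is that every `x ∈ closure A ∩ G` is a limit of points of `A ∩ G`. Pick
`y ∈ interior A ∩ G`: the open segment from `x` to `y` lies in `interior A` by convexity and in `G`
because `G` is affine, and `x` is in its closure.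
-/

open Set

theorem Topology.IsInducing.image_closure_preimage {X Y : Type*} [TopologicalSpace X]
    [TopologicalSpace Y] {f : X → Y} (hf : IsInducing f) (t : Set Y) :
    f '' closure (f ⁻¹' t) = closure (t ∩ range f) ∩ range f := by
  rw [hf.closure_eq_preimage_closure_image, image_preimage_eq_inter_range,
    image_preimage_eq_inter_range]

theorem Convex.closure_inter_subset_closure_inter {𝕜 E : Type*} [Field 𝕜] [LinearOrder 𝕜]
    [IsStrictOrderedRing 𝕜] [TopologicalSpace 𝕜] [OrderTopology 𝕜] [AddCommGroup E] [Module 𝕜 E]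
    [TopologicalSpace E] [IsTopologicalAddGroup E] [ContinuousSMul 𝕜 E] {s t : Set E}
    (hs : Convex 𝕜 s) (ht : Convex 𝕜 t) (hst : (interior s ∩ t).Nonempty) :
    closure s ∩ t ⊆ closure (s ∩ t) := by
  rintro x ⟨hxs, hxt⟩
  obtain ⟨y, hys, hyt⟩ := hst
  have hseg : openSegment 𝕜 x y ⊆ s ∩ t := fun _ hz ↦
    ⟨interior_subset (hs.openSegment_closure_interior_subset_interior hxs hys hz),
      ht.openSegment_subset hxt hyt hz⟩
  exact closure_mono hseg (segment_subset_closure_openSegment (left_mem_segment 𝕜 x y))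

theorem closure_inter_affine_eq_relative_closure_general
    {E : Type*} [AddCommGroup E] [Module ℝ E] [TopologicalSpace E]
    [IsTopologicalAddGroup E] [ContinuousSMul ℝ E]
    (A : Set E) (hA : Convex ℝ A) (G : AffineSubspace ℝ E)
    (h : (interior A ∩ (G : Set E)).Nonempty) :
    closure A ∩ (G : Set E) = Subtype.val '' closure {x : G | (x : E) ∈ A} := by
  rw [show {x : G | (x : E) ∈ A} = Subtype.val ⁻¹' A from rfl,
    Topology.IsEmbedding.subtypeVal.isInducing.image_closure_preimage, Subtype.range_coe_subtype,
    SetLike.setOfPred_mem_eq]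
  refine Subset.antisymm (fun x hx ↦ ⟨hA.closure_inter_subset_closure_inter G.convex h hx, hx.2⟩) ?_
  rintro x ⟨hx, hxG⟩
  exact ⟨closure_mono inter_subset_left hx, hxG⟩

theorem closure_inter_affine_eq_relative_closure
    {E : Type*} [AddCommGroup E] [Module ℝ E] [TopologicalSpace E]
    [IsTopologicalAddGroup E] [ContinuousSMul ℝ E]
    (A : Set E) (hA : Convex ℝ A) (G : AffineSubspace ℝ E)
    [FiniteDimensional ℝ G.direction]
    (h : (interior A ∩ (G : Set E)).Nonempty) :
    closure A ∩ (G : Set E) = Subtype.val '' closure {x : G | (x : E) ∈ A} :=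
  closure_inter_affine_eq_relative_closure_general A hA G h
end

section
/- Let A be a convex subset of a real topological vector space E and G a finite-dimensional affine subspace with (interior A) ∩ G ≠ ∅. Then (frontier A) ∩ G equals the frontier of A ∩ G in the relative topology of G. -/
/-!
Fix `y ∈ interior A ∩ G`. If `x ∈ G` lies in the relative interior of `A ∩ G`, push `x` slightly
beyond itself along the line from `y`, staying in `A ∩ G`; then `x` lies on an open segment from
the interior point `y` to a point of `A`, so `x ∈ interior A`. If `x ∈ closure A ∩ G`, the open
segment from `y` to `x` lies in `A ∩ G` and accumulates at `x`. Hence relative interior and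
relative closure of `A ∩ G` are the traces of `interior A` and `closure A` on `G`.
-/

open Set AffineMap

theorem SetLike.image_preimage_coe {S α : Type*} [SetLike S α] (p : S) (t : Set α) :
    ((↑) : p → α) '' ((↑) ⁻¹' t) = t ∩ p := by
  rw [image_preimage_eq_inter_range, Subtype.range_coe_subtype, setOfPred_mem_eq]

section

variable {𝕜 E : Type*} [Field 𝕜] [LinearOrder 𝕜] [IsStrictOrderedRing 𝕜]
  [TopologicalSpace 𝕜] [OrderTopology 𝕜]
  [AddCommGroup E] [Module 𝕜 E] [TopologicalSpace E]
  [IsTopologicalAddGroup E] [ContinuousSMul 𝕜 E]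
  {A : Set E} {y : E}

theorem Convex.closure_inter_subset_closure_inter_s9 {C : Set E} (hA : Convex 𝕜 A)
    (hC : Convex 𝕜 C) (hyA : y ∈ interior A) (hyC : y ∈ C) :
    closure A ∩ C ⊆ closure (A ∩ C) := by
  rintro x ⟨hxA, hxC⟩
  have hseg : openSegment 𝕜 y x ⊆ A ∩ C := fun z hz ↦
    ⟨interior_subset (hA.openSegment_interior_closure_subset_interior hyA hxA hz),
      hC.openSegment_subset hyC hxC hz⟩
  exact closure_mono hseg (segment_subset_closure_openSegment (right_mem_segment ..))

theorem Convex.closure_preimage_coe_affineSubspace {G : AffineSubspace 𝕜 E}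
    (hA : Convex 𝕜 A) (hyA : y ∈ interior A) (hyG : y ∈ G) :
    closure (((↑) : G → E) ⁻¹' A) = (↑) ⁻¹' closure A := by
  refine (continuous_subtype_val.closure_preimage_subset A).antisymm fun x hx ↦ ?_
  rw [closure_subtype, SetLike.image_preimage_coe]
  exact hA.closure_inter_subset_closure_inter_s9 G.convex hyA hyG ⟨hx, x.2⟩

theorem Convex.interior_preimage_coe_affineSubspace {G : AffineSubspace 𝕜 E}
    (hA : Convex 𝕜 A) (hyA : y ∈ interior A) (hyG : y ∈ G) :
    interior (((↑) : G → E) ⁻¹' A) = (↑) ⁻¹' interior A := by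
  refine Subset.antisymm (fun x hx ↦ ?_)
    (preimage_interior_subset_interior_preimage continuous_subtype_val)
  let line : 𝕜 → G := fun t ↦ ⟨lineMap y x t, AffineMap.lineMap_mem t hyG x.2⟩
  have hline : Continuous line := lineMap_continuous.subtype_mk _
  have hline_one : line 1 = x := Subtype.ext (lineMap_apply_one y (x : E))
  obtain ⟨t, ht1, ht⟩ := (hline.tendsto' 1 x hline_one).eventually_mem
    (mem_interior_iff_mem_nhds.1 hx) |>.exists_gt
  apply hA.openSegment_interior_self_subset_interior hyA ht
  nth_rw 1 [← lineMap_apply_zero (k := 𝕜) y (x : E), ← image_openSegment]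
  exact ⟨1, Ioo_subset_openSegment ⟨zero_lt_one, ht1⟩, lineMap_apply_one y (x : E)⟩

theorem Convex.frontier_preimage_coe_affineSubspace {G : AffineSubspace 𝕜 E}
    (hA : Convex 𝕜 A) (hyA : y ∈ interior A) (hyG : y ∈ G) :
    frontier (((↑) : G → E) ⁻¹' A) = (↑) ⁻¹' frontier A := by
  rw [frontier, frontier, hA.closure_preimage_coe_affineSubspace hyA hyG,
    hA.interior_preimage_coe_affineSubspace hyA hyG, preimage_sdiff]

end

theorem frontier_inter_affine_eq_relative_frontier_general
    {E : Type*} [AddCommGroup E] [Module ℝ E] [TopologicalSpace E]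
    [IsTopologicalAddGroup E] [ContinuousSMul ℝ E]
    (A : Set E) (hA : Convex ℝ A) (G : AffineSubspace ℝ E)
    (h : (interior A ∩ (G : Set E)).Nonempty) :
    frontier A ∩ (G : Set E) = Subtype.val '' frontier {x : G | (x : E) ∈ A} := by
  obtain ⟨y, hyA, hyG⟩ := h
  change _ = Subtype.val '' frontier (((↑) : G → E) ⁻¹' A)
  rw [hA.frontier_preimage_coe_affineSubspace hyA hyG, SetLike.image_preimage_coe]

theorem frontier_inter_affine_eq_relative_frontier
    {E : Type*} [AddCommGroup E] [Module ℝ E] [TopologicalSpace E]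
    [IsTopologicalAddGroup E] [ContinuousSMul ℝ E]
    (A : Set E) (hA : Convex ℝ A) (G : AffineSubspace ℝ E)
    [FiniteDimensional ℝ G.direction]
    (h : (interior A ∩ (G : Set E)).Nonempty) :
    frontier A ∩ (G : Set E) = Subtype.val '' frontier {x : G | (x : E) ∈ A} :=
  frontier_inter_affine_eq_relative_frontier_general A hA G h
end
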